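/- arXiv:1204.3771 — 3 statements merged into one kernel-verified Lean document; each statement's English description precedes it below -/
import Mathlib

section
/- For every integer n ≥ 1, consider the finite poset P_n whose elements are the pairs (i,j) of integers with 1 ≤ i ≤ j and j ≤ 2n − i, partially ordered by (i,j) ⪯ (i',j') if and only if i' ≤ i and j ≤ j'. The number of upper sets (coideals) of P_n equals C(2n, n). (P_n is the poset of positive roots of the root system of type B_n, and its upper sets correspond bijectively to the ad-nilpotent ideals of the Borel subalgebra.) -/
/-- The ground set of the poset `P_n` of positive roots of the root system of type
`B_n`: pairs `(i, j)` of integers with `1 ≤ i ≤ j` and `j ≤ 2n - i` (equivalently,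
`i + j ≤ 2n`). The partial order is `(i,j) ⪯ (i',j') ↔ i' ≤ i ∧ j ≤ j'`. -/
def rootPosetB (n : ℕ) : Finset (ℕ × ℕ) :=
  (Finset.Icc 1 (2*n) ×ˢ Finset.Icc 1 (2*n)).filter fun p =>
    p.1 ≤ p.2 ∧ p.1 + p.2 ≤ 2*n

/-!
In an upper set `S` of `P_n` the elements on an antidiagonal `i + j = t` occupy an initial
segment `1 ≤ i ≤ d t` of the rows, so `(i, j) ∈ S ↔ i ≤ d (i + j)`. The profile `d` starts at
`0`, grows by `0` or `1` at each step up to `2n`, and `2 d t ≤ t`. Its set `B ⊆ [1, 2n]` of growth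
points therefore satisfies the ballot condition `2 #{b ∈ B | b ≤ t} ≤ t` and recovers
`d t = #{b ∈ B | b ≤ t}`. Sorting ballot subsets of `[1, m]` by whether they contain `m` gives a
Pascal recursion, truncated at `2k > m`, whence those of size at most `K` number `C(m, K)`
whenever `2K ≤ m + 1`; for `m = 2n`, `K = n` this is `C(2n, n)`.
-/

open Finset

def countLE (B : Finset ℕ) (t : ℕ) : ℕ := #{x ∈ B | x ≤ t}

lemma countLE_succ (B : Finset ℕ) (t : ℕ) :
    countLE B (t + 1) = countLE B t + if t + 1 ∈ B then 1 else 0 := by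
  have hsplit : {x ∈ B | x ≤ t + 1} = {x ∈ B | x ≤ t} ∪ {x ∈ B | x = t + 1} := by
    ext x; simp only [mem_filter, mem_union, ← and_or_left, Nat.le_succ_iff]
  rw [countLE, hsplit, card_union_of_disjoint (disjoint_filter.2 fun _ _ h1 h2 => by omega),
    filter_eq' B (t + 1), apply_ite card, card_singleton, card_empty]
  rfl

lemma countLE_zero {B : Finset ℕ} (hB : 0 ∉ B) : countLE B 0 = 0 := by
  simp only [countLE, Nat.le_zero, filter_eq', if_neg hB, card_empty]

lemma countLE_eq_card {B : Finset ℕ} {m t : ℕ} (hB : B ⊆ Icc 1 m) (ht : m ≤ t) :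
    countLE B t = #B := by
  rw [countLE, filter_true_of_mem fun x hx => ((mem_Icc.1 (hB hx)).2.trans ht)]

lemma countLE_le_countLE_add (B : Finset ℕ) (u d : ℕ) :
    countLE B (u + d) ≤ countLE B u + d := by
  induction d with
  | zero => rfl
  | succ d ih => rw [← add_assoc, countLE_succ]; split_ifs <;> omega

lemma countLE_mono (B : Finset ℕ) : Monotone (countLE B) :=
  monotone_nat_of_le_succ fun t => by rw [countLE_succ]; omega

lemma mem_iff_countLE_lt {B : Finset ℕ} (t : ℕ) :
    t + 1 ∈ B ↔ countLE B t < countLE B (t + 1) := by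
  rw [countLE_succ]; split_ifs <;> simp_all

/-- The ballot condition: the `k`-th smallest element of `B` is at least `2k`. -/
def IsBallot (B : Finset ℕ) : Prop := ∀ b ∈ B, 2 * countLE B b ≤ b

instance : DecidablePred IsBallot := fun _ => inferInstanceAs (Decidable (∀ b ∈ _, _))

lemma IsBallot.two_mul_countLE_le {B : Finset ℕ} (hB : IsBallot B) (t : ℕ) :
    2 * countLE B t ≤ t := by
  induction t with
  | zero =>
    by_cases h0 : 0 ∈ B
    · exact hB 0 h0
    · simp [countLE_zero h0]
  | succ t ih =>
    by_cases ht : t + 1 ∈ B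
    · exact hB _ ht
    · rw [countLE_succ, if_neg ht]; omega

lemma IsBallot.two_mul_card_le {B : Finset ℕ} {m : ℕ} (hB : IsBallot B) (hBm : B ⊆ Icc 1 m) :
    2 * #B ≤ m :=
  countLE_eq_card hBm le_rfl ▸ hB.two_mul_countLE_le m

lemma isBallot_insert {B : Finset ℕ} {m : ℕ} (hB : B ⊆ Icc 1 m) :
    IsBallot (insert (m + 1) B) ↔ IsBallot B ∧ 2 * (#B + 1) ≤ m + 1 := by
  have hm : m + 1 ∉ B := fun h => by have := mem_Icc.1 (hB h); omega
  have hlow : ∀ b ∈ B, countLE (insert (m + 1) B) b = countLE B b := fun b hb => by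
    have := mem_Icc.1 (hB hb)
    rw [countLE, countLE, filter_insert, if_neg (by omega)]
  have htop : countLE (insert (m + 1) B) (m + 1) = #B + 1 := by
    rw [countLE_eq_card (insert_subset (by simp) (hB.trans (Icc_subset_Icc_right (by omega))))
      le_rfl, card_insert_of_notMem hm]
  constructor
  · intro h
    exact ⟨fun b hb => hlow b hb ▸ h b (mem_insert_of_mem hb), htop ▸ h _ (mem_insert_self _ _)⟩
  · rintro ⟨h, hcard⟩ b hb
    rcases mem_insert.1 hb with rfl | hb
    · rwa [htop]
    · rw [hlow b hb]; exact h b hb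

def ballotSets (m k : ℕ) : Finset (Finset ℕ) := {B ∈ (Icc 1 m).powersetCard k | IsBallot B}

lemma ballotSets_zero_right (m : ℕ) : ballotSets m 0 = {∅} := by
  ext B
  simp only [ballotSets, powersetCard_zero, mem_filter, mem_singleton, and_iff_left_iff_imp]
  rintro rfl b hb
  simp at hb

lemma ballotSets_eq_empty {m k : ℕ} (h : m < 2 * k) : ballotSets m k = ∅ :=
  filter_eq_empty_iff.2 fun B hB hBal => by
    obtain ⟨hBm, rfl⟩ := mem_powersetCard.1 hB
    have := hBal.two_mul_card_le hBm
    omega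

lemma card_ballotSets_succ_succ (m k : ℕ) :
    #(ballotSets (m + 1) (k + 1)) =
      #(ballotSets m (k + 1)) + if 2 * (k + 1) ≤ m + 1 then #(ballotSets m k) else 0 := by
  have hm : m + 1 ∉ Icc 1 m := by simp
  have hIcc : insert (m + 1) (Icc 1 m) = Icc 1 (m + 1) :=
    insert_Icc_right_eq_Icc_succ (Nat.le_add_left 1 m)
  have hnotMem : ∀ B ∈ (Icc 1 m).powersetCard k, m + 1 ∉ B := fun B hB h =>
    hm ((mem_powersetCard.1 hB).1 h)
  have hinsert : {B ∈ ((Icc 1 m).powersetCard k).image (insert (m + 1)) | IsBallot B} =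
      if 2 * (k + 1) ≤ m + 1 then (ballotSets m k).image (insert (m + 1)) else ∅ := by
    rw [filter_image]
    split_ifs with hk
    · refine congrArg _ (filter_congr fun B hB => ?_)
      rw [isBallot_insert (mem_powersetCard.1 hB).1, (mem_powersetCard.1 hB).2]
      exact and_iff_left hk
    · refine image_eq_empty.2 (filter_eq_empty_iff.2 fun B hB => ?_)
      rw [isBallot_insert (mem_powersetCard.1 hB).1, (mem_powersetCard.1 hB).2]
      exact fun h => hk h.2
  have hdisj : Disjoint (ballotSets m (k + 1))
      ({B ∈ ((Icc 1 m).powersetCard k).image (insert (m + 1)) | IsBallot B}) := by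
    refine disjoint_left.2 fun B hB hB' => ?_
    obtain ⟨C, -, rfl⟩ := mem_image.1 (mem_filter.1 hB').1
    exact hm ((mem_powersetCard.1 (mem_filter.1 hB).1).1 (mem_insert_self _ _))
  rw [ballotSets, ← hIcc, powersetCard_succ_insert hm, filter_union]
  change #(ballotSets m (k + 1) ∪ _) = _
  rw [card_union_of_disjoint hdisj, hinsert]
  split_ifs
  · rw [card_image_of_injOn]
    intro B hB C hC hBC
    have := congrArg (·.erase (m + 1)) hBC
    rwa [erase_insert (hnotMem B (mem_filter.1 hB).1),
      erase_insert (hnotMem C (mem_filter.1 hC).1)] at this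
  · rfl

lemma sum_card_ballotSets_succ {m : ℕ}
    (ih : ∀ K, 2 * K ≤ m + 1 → ∑ k ∈ range (K + 1), #(ballotSets m k) = m.choose K)
    {K : ℕ} (hK : 2 * K ≤ m + 1) :
    ∑ k ∈ range (K + 1), #(ballotSets (m + 1) k) = (m + 1).choose K := by
  cases K with
  | zero => simp [ballotSets_zero_right]
  | succ K =>
    have hpascal : ∀ k ∈ range (K + 1), #(ballotSets (m + 1) (k + 1)) =
        #(ballotSets m (k + 1)) + #(ballotSets m k) := fun k hk => by
      rw [card_ballotSets_succ_succ, if_pos (by have := mem_range.1 hk; omega)]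
    calc ∑ k ∈ range (K + 2), #(ballotSets (m + 1) k)
        = (∑ k ∈ range (K + 1), #(ballotSets m (k + 1)) + #(ballotSets m 0)) +
            ∑ k ∈ range (K + 1), #(ballotSets m k) := by
          rw [sum_range_succ', sum_congr rfl hpascal, sum_add_distrib, ballotSets_zero_right,
            ballotSets_zero_right]
          ring
      _ = m.choose (K + 1) + m.choose K := by
          rw [← sum_range_succ' (fun k => #(ballotSets m k)), ih _ hK, ih _ (by omega)]
      _ = (m + 1).choose (K + 1) := by rw [Nat.choose_succ_succ', add_comm]

lemma sum_card_ballotSets (m K : ℕ) (hK : 2 * K ≤ m + 1) :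
    ∑ k ∈ range (K + 1), #(ballotSets m k) = m.choose K := by
  induction m generalizing K with
  | zero =>
    obtain rfl : K = 0 := by omega
    simp [ballotSets_zero_right]
  | succ m ih =>
    by_cases h : 2 * K ≤ m + 1
    · exact sum_card_ballotSets_succ ih h
    · obtain ⟨K, rfl⟩ : ∃ K', K = K' + 1 := ⟨K - 1, by omega⟩
      obtain rfl : m = 2 * K := by omega
      rw [sum_range_succ, ballotSets_eq_empty (by omega), card_empty, add_zero,
        sum_card_ballotSets_succ ih (by omega), Nat.choose_symm_half]

lemma card_filter_isBallot_powerset_Icc (n : ℕ) :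
    #{B ∈ (Icc 1 (2 * n)).powerset | IsBallot B} = (2 * n).choose n := by
  rw [card_eq_sum_card_fiberwise (f := card) (t := range (n + 1)),
    ← sum_card_ballotSets _ _ (by omega)]
  · refine sum_congr rfl fun k _ => congrArg card ?_
    ext B
    simp only [mem_filter, mem_powerset, ballotSets, mem_powersetCard]
    tauto
  · intro B hB
    obtain ⟨hBn, hB⟩ := mem_filter.1 hB
    have := hB.two_mul_card_le (mem_powerset.1 hBn)
    simp only [coe_range, Set.mem_Iio]
    omega

def jumpSet (d : ℕ → ℕ) (m : ℕ) : Finset ℕ := {t ∈ Icc 1 m | d (t - 1) < d t}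

lemma countLE_jumpSet {d : ℕ → ℕ} {m : ℕ} (h0 : d 0 = 0)
    (hstep : ∀ t < m, d t ≤ d (t + 1) ∧ d (t + 1) ≤ d t + 1) {t : ℕ} (ht : t ≤ m) :
    countLE (jumpSet d m) t = d t := by
  induction t with
  | zero => rw [h0, countLE_zero (by simp [jumpSet])]
  | succ t ih =>
    have hmem : t + 1 ∈ jumpSet d m ↔ d t < d (t + 1) := by simp [jumpSet, ht]
    rw [countLE_succ, ih (by omega)]
    have := hstep t (by omega)
    by_cases h : d t < d (t + 1)
    · rw [if_pos (hmem.2 h)]; omega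
    · rw [if_neg (mt hmem.1 h)]; omega

lemma jumpSet_countLE {B : Finset ℕ} {m : ℕ} (hB : B ⊆ Icc 1 m) : jumpSet (countLE B) m = B := by
  ext t
  simp only [jumpSet, mem_filter]
  constructor
  · rintro ⟨ht, hlt⟩
    obtain ⟨s, rfl⟩ : ∃ s, t = s + 1 := ⟨t - 1, by have := (mem_Icc.1 ht).1; omega⟩
    exact (mem_iff_countLE_lt s).2 hlt
  · intro ht
    obtain ⟨s, rfl⟩ : ∃ s, t = s + 1 := ⟨t - 1, by have := (mem_Icc.1 (hB ht)).1; omega⟩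
    exact ⟨hB ht, (mem_iff_countLE_lt s).1 ht⟩

lemma mem_rootPosetB {n : ℕ} {p : ℕ × ℕ} :
    p ∈ rootPosetB n ↔ 1 ≤ p.1 ∧ p.1 ≤ p.2 ∧ p.1 + p.2 ≤ 2 * n := by
  simp only [rootPosetB, mem_filter, mem_product, mem_Icc]
  omega

def antidiagCount (S : Finset (ℕ × ℕ)) (t : ℕ) : ℕ := #{i ∈ Icc 1 t | (i, t - i) ∈ S}

def toBallot (n : ℕ) (S : Finset (ℕ × ℕ)) : Finset ℕ := jumpSet (antidiagCount S) (2 * n)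

def ofBallot (n : ℕ) (B : Finset ℕ) : Finset (ℕ × ℕ) :=
  {p ∈ rootPosetB n | p.1 ≤ countLE B (p.1 + p.2)}

section coideal

variable {n : ℕ} {S : Finset (ℕ × ℕ)} (hS : S ⊆ rootPosetB n)
  (hup : ∀ p ∈ S, ∀ q ∈ rootPosetB n, q.1 ≤ p.1 → p.2 ≤ q.2 → q ∈ S)
include hS

lemma two_mul_antidiagCount_le (t : ℕ) : 2 * antidiagCount S t ≤ t := by
  have hsub : {i ∈ Icc 1 t | (i, t - i) ∈ S} ⊆ Icc 1 (t / 2) := fun i hi => by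
    obtain ⟨hi, hiS⟩ := mem_filter.1 hi
    have := mem_rootPosetB.1 (hS hiS)
    simp only [mem_Icc] at hi ⊢
    omega
  have := card_le_card hsub
  rw [Nat.card_Icc] at this
  unfold antidiagCount
  omega

include hup

lemma mem_antidiag_of_le {t i i' : ℕ} (h : (i, t - i) ∈ S) (hi' : 1 ≤ i') (hle : i' ≤ i) :
    (i', t - i') ∈ S := by
  have := mem_rootPosetB.1 (hS h)
  exact hup _ h _ (mem_rootPosetB.2 ⟨hi', by dsimp only at *; omega, by dsimp only at *; omega⟩)
    hle (by dsimp only; omega)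

lemma mem_iff_le_antidiagCount {i j : ℕ} (hp : (i, j) ∈ rootPosetB n) :
    (i, j) ∈ S ↔ i ≤ antidiagCount S (i + j) := by
  have hp := mem_rootPosetB.1 hp
  dsimp only at hp
  constructor
  · intro h
    have hsub : Icc 1 i ⊆ {i' ∈ Icc 1 (i + j) | (i', i + j - i') ∈ S} := fun i' hi' => by
      have hi' := mem_Icc.1 hi'
      refine mem_filter.2 ⟨mem_Icc.2 ⟨hi'.1, by omega⟩, mem_antidiag_of_le hS hup ?_ hi'.1 hi'.2⟩
      rwa [Nat.add_sub_cancel_left]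
    simpa [antidiagCount] using card_le_card hsub
  · intro h
    by_contra hn
    have hsub : {i' ∈ Icc 1 (i + j) | (i', i + j - i') ∈ S} ⊆ Icc 1 (i - 1) := fun i' hi' => by
      obtain ⟨hi', hS'⟩ := mem_filter.1 hi'
      have hi' := mem_Icc.1 hi'
      refine mem_Icc.2 ⟨hi'.1, ?_⟩
      by_contra hlt
      have := mem_antidiag_of_le hS hup hS' hp.1 (by omega)
      rw [Nat.add_sub_cancel_left] at this
      exact hn this
    have := card_le_card hsub
    rw [Nat.card_Icc] at this
    unfold antidiagCount at h
    omega

lemma antidiagCount_le_succ {t : ℕ} (ht : t < 2 * n) :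
    antidiagCount S t ≤ antidiagCount S (t + 1) := by
  refine card_le_card fun i hi => ?_
  obtain ⟨hi, hiS⟩ := mem_filter.1 hi
  have := mem_rootPosetB.1 (hS hiS)
  dsimp only at this
  have hq : (i, t + 1 - i) ∈ rootPosetB n :=
    mem_rootPosetB.2 ⟨this.1, by dsimp only; omega, by dsimp only; omega⟩
  exact mem_filter.2
    ⟨Icc_subset_Icc_right (by omega) hi, hup _ hiS _ hq le_rfl (by dsimp only; omega)⟩

lemma antidiagCount_succ_le (t : ℕ) : antidiagCount S (t + 1) ≤ antidiagCount S t + 1 := by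
  have hsub : {i ∈ Icc 1 (t + 1) | (i, t + 1 - i) ∈ S} ⊆ Icc 1 (antidiagCount S t + 1) :=
    fun i hi => by
      obtain ⟨hi, hiS⟩ := mem_filter.1 hi
      have hp := mem_rootPosetB.1 (hS hiS)
      dsimp only at hp
      refine mem_Icc.2 ⟨hp.1, ?_⟩
      by_cases hi1 : i = 1
      · omega
      have hq : (i - 1, t + 1 - i) ∈ rootPosetB n := mem_rootPosetB.2 ⟨by dsimp only; omega,
        by dsimp only; omega, by dsimp only; omega⟩
      have := (mem_iff_le_antidiagCount hS hup hq).1 (hup _ hiS _ hq (by dsimp only; omega) le_rfl)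
      rw [show i - 1 + (t + 1 - i) = t by omega] at this
      omega
  simpa [antidiagCount] using card_le_card hsub

lemma countLE_toBallot {t : ℕ} (ht : t ≤ 2 * n) :
    countLE (toBallot n S) t = antidiagCount S t :=
  countLE_jumpSet (d := antidiagCount S) (by simpa using two_mul_antidiagCount_le hS 0)
    (fun _ hs => ⟨antidiagCount_le_succ hS hup hs, antidiagCount_succ_le hS hup _⟩) ht

lemma isBallot_toBallot : IsBallot (toBallot n S) := fun b hb => by
  rw [countLE_toBallot hS hup (mem_Icc.1 (mem_filter.1 hb).1).2]
  exact two_mul_antidiagCount_le hS b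

lemma ofBallot_toBallot : ofBallot n (toBallot n S) = S := by
  ext ⟨i, j⟩
  simp only [ofBallot, mem_filter]
  constructor
  · rintro ⟨hp, hle⟩
    rwa [countLE_toBallot hS hup (mem_rootPosetB.1 hp).2.2,
      ← mem_iff_le_antidiagCount hS hup hp] at hle
  · intro h
    refine ⟨hS h, ?_⟩
    rw [countLE_toBallot hS hup (mem_rootPosetB.1 (hS h)).2.2]
    exact (mem_iff_le_antidiagCount hS hup (hS h)).1 h

end coideal

lemma ofBallot_upward_closed (n : ℕ) (B : Finset ℕ) : ∀ p ∈ ofBallot n B, ∀ q ∈ rootPosetB n,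
    q.1 ≤ p.1 → p.2 ≤ q.2 → q ∈ ofBallot n B := by
  rintro ⟨i, j⟩ hp ⟨i', j'⟩ hq (hi : i' ≤ i) (hj : j ≤ j')
  refine mem_filter.2 ⟨hq, ?_⟩
  have hp := (mem_filter.1 hp).2
  dsimp only at hp ⊢
  rcases le_total (i + j) (i' + j') with h | h
  · exact hi.trans (hp.trans (countLE_mono B h))
  · have := countLE_le_countLE_add B (i' + j') (i + j - (i' + j'))
    rw [Nat.add_sub_cancel' h] at this
    omega

lemma antidiagCount_ofBallot {n : ℕ} {B : Finset ℕ} (hB : IsBallot B) {t : ℕ} (ht : t ≤ 2 * n) :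
    antidiagCount (ofBallot n B) t = countLE B t := by
  have := hB.two_mul_countLE_le t
  have hslice : {i ∈ Icc 1 t | (i, t - i) ∈ ofBallot n B} = Icc 1 (countLE B t) := by
    ext i
    simp only [mem_filter, mem_Icc, ofBallot, mem_rootPosetB]
    by_cases hit : i ≤ t
    · rw [Nat.add_sub_cancel' hit]
      omega
    · omega
  rw [antidiagCount, hslice, Nat.card_Icc, Nat.add_sub_cancel]

lemma toBallot_ofBallot {n : ℕ} {B : Finset ℕ} (hB : IsBallot B) (hBs : B ⊆ Icc 1 (2 * n)) :
    toBallot n (ofBallot n B) = B := by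
  conv_rhs => rw [← jumpSet_countLE hBs]
  rw [toBallot, jumpSet, jumpSet]
  refine filter_congr fun t ht => ?_
  have ht := (mem_Icc.1 ht).2
  rw [antidiagCount_ofBallot hB ht, antidiagCount_ofBallot hB (by omega)]

theorem card_upperSets_rootPosetB_general (n : ℕ) :
    ((rootPosetB n).powerset.filter fun S =>
        ∀ p ∈ S, ∀ q ∈ rootPosetB n, q.1 ≤ p.1 → p.2 ≤ q.2 → q ∈ S).card =
      (2*n).choose n := by
  rw [← card_filter_isBallot_powerset_Icc n]
  refine card_nbij' (toBallot n) (ofBallot n) ?_ ?_ ?_ ?_ <;>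
    simp only [coe_filter, mem_powerset]
  · rintro S ⟨hS, hup⟩
    exact ⟨filter_subset _ _, isBallot_toBallot hS hup⟩
  · rintro B -
    exact ⟨filter_subset _ _, ofBallot_upward_closed n B⟩
  · rintro S ⟨hS, hup⟩
    exact ofBallot_toBallot hS hup
  · rintro B ⟨hBs, hB⟩
    exact toBallot_ofBallot hB hBs

/-- The number of upper sets (coideals) of the poset `P_n` of positive roots of type
`B_n` equals `C(2n, n)`. -/
theorem card_upperSets_rootPosetB (n : ℕ) (hn : 1 ≤ n) :
    ((rootPosetB n).powerset.filter fun S =>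
        ∀ p ∈ S, ∀ q ∈ rootPosetB n, q.1 ≤ p.1 → p.2 ≤ q.2 → q ∈ S).card =
      (2*n).choose n :=
  card_upperSets_rootPosetB_general n
end

section
/- For every integer n ≥ 2, 3·∑_{k=1}^{n−2} 2^{k+1} · ∑_{s=0}^{n−3} C(2n−k−4, s) = 3(n−2)·2^{2n−3} − 6(n−2)·C(2n−4, n−2). -/
/-!
Put `m = n - 2` and `S(N, b) = ∑_{s<b} C(N, s)`. Two applications of Pascal's rule give
`S(a+2, b+1) = 4 S(a, b) + C(a, b) - C(a, b-1)`, so passing from `m` to `m + 1` multiplies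
`∑_{k=1}^m 2^(k+1) S(2m-k, m)` by `4`, up to the new top term `2^(m+2) (2^(m+1) - 1)` and the sum
`∑_{k=1}^m 2^(k+1) (C(2m-k, m) - C(2m-k, m-1))`. The latter telescopes, with primitive
`2^(k+1) C(2m+1-k, m)`, to `2^(m+2) - 4 C(2m, m)`, and the recursion
`(m+1) C(2m+2, m+1) = 2 (2m+1) C(2m, m)` of the central binomial coefficients closes the induction.
-/

/-- The binomial coefficient `C(m, r)` for integer arguments, with the convention
that `C(m, r) = 0` when `r < 0` or `r > m`. -/
def intChoose (m r : ℤ) : ℤ :=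
  if 0 ≤ r ∧ r ≤ m then ((m.toNat).choose r.toNat : ℤ) else 0

open Finset

lemma intChoose_natCast (a b : ℕ) : intChoose a b = a.choose b := by
  unfold intChoose
  split_ifs with h
  · simp
  · rw [Nat.choose_eq_zero_of_lt (by omega), Nat.cast_zero]

lemma sum_Icc_intChoose_natCast (N m : ℕ) :
    ∑ s ∈ Icc (0 : ℤ) (m - 1), intChoose N s = ∑ s ∈ range m, (N.choose s : ℤ) :=
  sum_nbij' Int.toNat (↑) (by simp; omega) (by simp) (by simp; omega) (fun _ _ => rfl)
    (by simp only [mem_Icc]; intro s hs; rw [← intChoose_natCast, Int.toNat_of_nonneg hs.1])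

lemma sum_range_succ_choose_succ (N b : ℕ) :
    ∑ s ∈ range (b + 1), (N + 1).choose s
      = ∑ s ∈ range (b + 1), N.choose s + ∑ s ∈ range b, N.choose s := by
  simp only [sum_range_succ' _ b, Nat.choose_succ_succ, sum_add_distrib, Nat.choose_zero_right]
  ring

lemma sum_range_choose_add_two (a b : ℕ) :
    ∑ s ∈ range (b + 2), (a + 2).choose s + a.choose b
      = 4 * ∑ s ∈ range (b + 1), a.choose s + a.choose (b + 1) := by
  rw [sum_range_succ_choose_succ, sum_range_succ_choose_succ, sum_range_succ_choose_succ,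
    sum_range_succ _ (b + 1), sum_range_succ _ b]
  ring

lemma sum_range_choose_self_succ (m : ℕ) :
    ∑ s ∈ range (m + 1), ((m + 1).choose s : ℤ) = 2 ^ (m + 1) - 1 := by
  have h := Nat.sum_range_choose (m + 1)
  rw [sum_range_succ, Nat.choose_self] at h
  rw [eq_sub_iff_add_eq]
  exact_mod_cast h

lemma sum_Icc_two_pow_mul_choose_sub_choose (m : ℕ) :
    ∑ k ∈ Icc 1 m, (2 : ℤ) ^ (k + 1) * ((2 * m - k).choose m - (2 * m - k).choose (m - 1))
      = 2 ^ (m + 2) - 4 * m.centralBinom := by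
  set t : ℕ → ℤ := fun k => 2 ^ (k + 1) * (2 * m + 1 - k).choose m
  have telescope : ∀ k ∈ Ico 1 (m + 1), (2 : ℤ) ^ (k + 1) *
      ((2 * m - k).choose m - (2 * m - k).choose (m - 1)) = t (k + 1) - t k := by
    intro k hk
    rw [mem_Ico] at hk
    obtain ⟨j, rfl⟩ : ∃ j, m = j + 1 := ⟨m - 1, by omega⟩
    obtain ⟨a, ha⟩ : ∃ a, 2 * (j + 1) - k = a + j + 1 := ⟨j + 1 - k, by omega⟩
    simp only [t, show 2 * (j + 1) + 1 - k = a + j + 1 + 1 by omega, ha,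
      show 2 * (j + 1) + 1 - (k + 1) = a + j + 1 by omega, Nat.choose_succ_succ, Nat.add_sub_cancel]
    push_cast
    ring
  rw [← Ico_add_one_right_eq_Icc, sum_congr rfl telescope, sum_Ico_sub t (by omega)]
  simp only [t, show 2 * m + 1 - (m + 1) = m by omega, Nat.choose_self,
    Nat.centralBinom_eq_two_mul_choose, Nat.add_sub_cancel]
  push_cast
  ring

theorem sum_Icc_two_pow_mul_sum_range_choose (m : ℕ) :
    ∑ k ∈ Icc 1 m, (2 : ℤ) ^ (k + 1) * ∑ s ∈ range m, ((2 * m - k).choose s : ℤ)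
      = m * 2 ^ (2 * m + 1) - 2 * m * m.centralBinom := by
  induction m with
  | zero => simp
  | succ m ih =>
    have step : ∀ k ∈ Icc 1 m, (2 : ℤ) ^ (k + 1) *
          ∑ s ∈ range (m + 1), ((2 * (m + 1) - k).choose s : ℤ)
        = 4 * ((2 : ℤ) ^ (k + 1) * ∑ s ∈ range m, ((2 * m - k).choose s : ℤ))
          + 2 ^ (k + 1) * ((2 * m - k).choose m - (2 * m - k).choose (m - 1)) := by
      intro k hk
      rw [mem_Icc] at hk
      obtain ⟨j, rfl⟩ : ∃ j, m = j + 1 := ⟨m - 1, by omega⟩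
      have h := congrArg (Nat.cast : ℕ → ℤ) (sum_range_choose_add_two (2 * (j + 1) - k) j)
      rw [show 2 * (j + 1 + 1) - k = 2 * (j + 1) - k + 2 by omega]
      push_cast at h ⊢
      linear_combination 2 ^ (k + 1) * h
    have hc := congrArg (Nat.cast : ℕ → ℤ) (Nat.succ_mul_centralBinom_succ m)
    push_cast at hc
    rw [sum_Icc_succ_top (by omega), sum_congr rfl step, sum_add_distrib, ← mul_sum, ih,
      sum_Icc_two_pow_mul_choose_sub_choose, show 2 * (m + 1) - (m + 1) = m + 1 by omega,
      sum_range_choose_self_succ]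
    push_cast
    linear_combination 2 * hc

theorem sum_k_partial_binomial (n : ℕ) (hn : 2 ≤ n) :
    3 * ∑ k ∈ Finset.Icc 1 (n-2), (2:ℤ)^(k+1) *
        ∑ s ∈ Finset.Icc (0:ℤ) ((n:ℤ) - 3), intChoose (2*(n:ℤ) - k - 4) s =
      3*((n:ℤ) - 2) * 2^(2*n-3) - 6*((n:ℤ) - 2) * intChoose (2*(n:ℤ) - 4) ((n:ℤ) - 2) := by
  obtain ⟨m, rfl⟩ : ∃ m, n = m + 2 := ⟨n - 2, by omega⟩
  have inner : ∀ k ∈ Icc 1 m, (2 : ℤ) ^ (k + 1) *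
        ∑ s ∈ Icc (0 : ℤ) ((m + 2 : ℕ) - 3), intChoose (2 * (m + 2 : ℕ) - k - 4) s
      = 2 ^ (k + 1) * ∑ s ∈ range m, ((2 * m - k).choose s : ℤ) := by
    intro k hk
    rw [mem_Icc] at hk
    rw [show ((m + 2 : ℕ) : ℤ) - 3 = m - 1 by push_cast; ring,
      show 2 * ((m + 2 : ℕ) : ℤ) - k - 4 = (2 * m - k : ℕ) by omega, sum_Icc_intChoose_natCast]
  rw [Nat.add_sub_cancel, sum_congr rfl inner, sum_Icc_two_pow_mul_sum_range_choose,
    show 2 * ((m + 2 : ℕ) : ℤ) - 4 = (2 * m : ℕ) by push_cast; ring,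
    show ((m + 2 : ℕ) : ℤ) - 2 = m by push_cast; ring, intChoose_natCast,
    ← Nat.centralBinom_eq_two_mul_choose, show 2 * (m + 2) - 3 = 2 * m + 1 by omega]
  ring
end

section
/- For all integers n ≥ 3 and k with 1 ≤ k ≤ n−2, ∑_{b=1}^{n−2} (b²−3)·( C(2n−b−k−4, n−k−2) − C(2n−b−k−4, n−2) ) = −2n²·C(2n−k−2, n+1) + (2n²−1)·C(2n−k−3, n) − 3·C(2n−k−4, n−3) + 3·C(2n−k−4, n−1) + (2n−5)·C(2n−k−3, n−3) − 2(n−2)²·C(2n−k−3, n−2) − 2(n−1)(n−2)·C(2n−k−3, n−1) + 2(n+1)(n−1)·C(2n−k−3, n+1) + 2·C(2n−k−2, n−3) − 2(n−2)·C(2n−k−2, n−2) + 2(n−2)(n−1)·C(2n−k−2, n−1). -/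
theorem intChoose_of_lt {m r : ℤ} (h : m < r) : intChoose m r = 0 :=
  if_neg (by omega)

theorem intChoose_of_neg {m r : ℤ} (h : r < 0) : intChoose m r = 0 :=
  if_neg (by omega)

@[simp, norm_cast]
theorem intChoose_natCast_s17 (m r : ℕ) : intChoose m r = m.choose r := by
  unfold intChoose
  split_ifs with h
  · simp
  · rw [Nat.choose_eq_zero_of_lt (by omega), Nat.cast_zero]

theorem intChoose_add_one_add_one {m : ℤ} (hm : 0 ≤ m) (r : ℤ) :
    intChoose (m + 1) (r + 1) = intChoose m r + intChoose m (r + 1) := by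
  lift m to ℕ using hm
  obtain hr | rfl | hr : r < -1 ∨ r = -1 ∨ 0 ≤ r := by omega
  · have hr' : r + 1 < 0 := by omega
    rw [intChoose_of_neg hr', intChoose_of_neg hr', intChoose_of_neg (by omega), add_zero]
  · rw [neg_add_cancel, intChoose_of_neg (r := -1) (by norm_num), zero_add]
    have h₁ := intChoose_natCast_s17 (m + 1) 0
    have h₂ := intChoose_natCast_s17 m 0
    push_cast at h₁ h₂
    rw [h₁, h₂, Nat.choose_zero_right, Nat.choose_zero_right]
  · lift r to ℕ using hr
    exact_mod_cast Nat.choose_succ_succ' m r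

theorem intChoose_symm (m r : ℤ) : intChoose m (m - r) = intChoose m r := by
  by_cases h : 0 ≤ r ∧ r ≤ m
  · obtain ⟨hr, hrm⟩ := h
    lift r to ℕ using hr
    lift m to ℕ using by omega
    rw [← Nat.cast_sub (by omega), intChoose_natCast_s17, intChoose_natCast_s17,
      Nat.choose_symm (by omega)]
  · rcases not_and_or.1 h with hr | hrm
    · rw [intChoose_of_lt (by omega), intChoose_of_neg (by omega)]
    · rw [intChoose_of_neg (by omega), intChoose_of_lt (by omega)]

theorem intChoose_add_one_right_mul (m r : ℤ) :
    intChoose m (r + 1) * (r + 1) = intChoose m r * (m - r) := by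
  obtain hr | rfl | hr | rfl | hrm : r < -1 ∨ r = -1 ∨ (0 ≤ r ∧ r < m) ∨ r = m ∨ m < r := by omega
  · rw [intChoose_of_neg (by omega : r + 1 < 0), intChoose_of_neg (by omega), zero_mul, zero_mul]
  · rw [neg_add_cancel, mul_zero, intChoose_of_neg (by norm_num), zero_mul]
  · obtain ⟨hr, hrm⟩ := hr
    lift r to ℕ using hr
    lift m to ℕ using by omega
    rw [← Nat.cast_sub (by omega), ← Nat.cast_add_one, intChoose_natCast_s17, intChoose_natCast_s17]
    exact_mod_cast Nat.choose_succ_right_eq m r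
  · rw [intChoose_of_lt (by omega), sub_self, zero_mul, mul_zero]
  · rw [intChoose_of_lt (by omega), intChoose_of_lt hrm, zero_mul, zero_mul]

def antidiff (n k b : ℤ) : ℤ :=
  (n - k - 1) * (n - k) * intChoose (2 * n - k - 3 - b) (n - k + 1)
    + (n - k - 1) * (5 - 2 * n) * intChoose (2 * n - k - 3 - b) (n - k)
    + ((n - 2) ^ 2 - 3) * intChoose (2 * n - k - 3 - b) (n - k - 1)
    - n * (n - 1) * intChoose (2 * n - k - 3 - b) (n + 1)
    - (n - 1) * (2 * k - 2 * n + 5) * intChoose (2 * n - k - 3 - b) n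
    - ((n - k - 2) ^ 2 - 3) * intChoose (2 * n - k - 3 - b) (n - 1)

theorem antidiff_sub_antidiff_add_one {n k b : ℤ} (h : 0 ≤ 2 * n - b - k - 4) :
    antidiff n k b - antidiff n k (b + 1) =
      (b ^ 2 - 3) * (intChoose (2 * n - b - k - 4) (n - k - 2)
        - intChoose (2 * n - b - k - 4) (n - 2)) := by
  have p₁ := intChoose_add_one_add_one h (n - k)
  have p₂ := intChoose_add_one_add_one h (n - k - 1)
  have p₃ := intChoose_add_one_add_one h (n - k - 2)
  have p₄ := intChoose_add_one_add_one h n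
  have p₅ := intChoose_add_one_add_one h (n - 1)
  have p₆ := intChoose_add_one_add_one h (n - 2)
  have a₁ := intChoose_add_one_right_mul (2 * n - b - k - 4) (n - k - 2)
  have a₂ := intChoose_add_one_right_mul (2 * n - b - k - 4) (n - k - 1)
  have a₃ := intChoose_add_one_right_mul (2 * n - b - k - 4) (n - 2)
  have a₄ := intChoose_add_one_right_mul (2 * n - b - k - 4) (n - 1)
  unfold antidiff
  -- `ring_nf` also normalises the arguments of `intChoose`, identifying e.g.
  -- `2 * n - b - k - 4 + 1` with `2 * n - k - 3 - b`.
  linear_combination (norm := ring_nf)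
    (n - k - 1) * (n - k) * p₁ + (n - k - 1) * (5 - 2 * n) * p₂ + ((n - 2) ^ 2 - 3) * p₃
      - n * (n - 1) * p₄ - (n - 1) * (2 * k - 2 * n + 5) * p₅ - ((n - k - 2) ^ 2 - 3) * p₆
      + (2 - n - b) * a₁ + (n - k - 1) * a₂ + (n - 2 + b - k) * a₃ - (n - 1) * a₄

theorem antidiff_eq_zero {n k : ℤ} (hk : 0 ≤ k) : antidiff n k (n - 1) = 0 := by
  unfold antidiff
  rw [intChoose_of_lt (by omega), intChoose_of_lt (by omega), intChoose_of_lt (by omega),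
    intChoose_of_lt (by omega), intChoose_of_lt (by omega), intChoose_of_lt (by omega)]
  ring

theorem antidiff_one {n k : ℤ} (h : 0 ≤ 2 * n - k - 4) :
    antidiff n k 1 =
      -2*n^2 * intChoose (2*n - k - 2) (n + 1)
        + (2*n^2 - 1) * intChoose (2*n - k - 3) n
        - 3 * intChoose (2*n - k - 4) (n - 3)
        + 3 * intChoose (2*n - k - 4) (n - 1)
        + (2*n - 5) * intChoose (2*n - k - 3) (n - 3)
        - 2*(n - 2)^2 * intChoose (2*n - k - 3) (n - 2)
        - 2*(n - 1)*(n - 2) * intChoose (2*n - k - 3) (n - 1)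
        + 2*(n + 1)*(n - 1) * intChoose (2*n - k - 3) (n + 1)
        + 2 * intChoose (2*n - k - 2) (n - 3)
        - 2*(n - 2) * intChoose (2*n - k - 2) (n - 2)
        + 2*(n - 2)*(n - 1) * intChoose (2*n - k - 2) (n - 1) := by
  have h' : 0 ≤ 2 * n - k - 4 + 1 := by omega
  have p₁ := intChoose_add_one_add_one h' n
  have p₂ := intChoose_add_one_add_one h' (n - 4)
  have p₃ := intChoose_add_one_add_one h' (n - 3)
  have p₄ := intChoose_add_one_add_one h' (n - 2)
  have q₁ := intChoose_add_one_add_one h n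
  have q₂ := intChoose_add_one_add_one h (n - 1)
  have q₃ := intChoose_add_one_add_one h (n - 4)
  have q₄ := intChoose_add_one_add_one h (n - 5)
  have s₁ := intChoose_symm (2 * n - k - 4) (n - k - 5)
  have s₂ := intChoose_symm (2 * n - k - 4) (n - k - 4)
  have s₃ := intChoose_symm (2 * n - k - 4) (n - k - 3)
  have s₄ := intChoose_symm (2 * n - k - 4) (n - k - 1)
  have s₅ := intChoose_symm (2 * n - k - 4) (n - k)
  have s₆ := intChoose_symm (2 * n - k - 4) (n - k + 1)
  have a₁ := intChoose_add_one_right_mul (2 * n - k - 4) (n - k - 5)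
  have a₂ := intChoose_add_one_right_mul (2 * n - k - 4) (n - k - 4)
  have a₃ := intChoose_add_one_right_mul (2 * n - k - 4) (n - k - 1)
  have a₄ := intChoose_add_one_right_mul (2 * n - k - 4) (n - k)
  unfold antidiff
  linear_combination (norm := ring_nf)
    2 * n ^ 2 * p₁ - 2 * p₂ + 2 * (n - 2) * p₃ - 2 * (n - 2) * (n - 1) * p₄
      + 2 * q₁ + q₂ - q₃ - 2 * q₄
      + (-n ^ 2 + n + 2) * s₁ + (3 - (n - 1) * (2 * k - 2 * n + 5)) * s₂
      + (1 - (n - k - 2) ^ 2) * s₃ + 2 * s₄ - 3 * s₅ - 2 * s₆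
      + (n - 2) * a₁ - (n - k - 1) * a₂ - (n - 1) * a₃ + (n - k - 2) * a₄

theorem sum_b_choose_identity_general (n k : ℕ) (hn : 3 ≤ n) (hk2 : k ≤ n-2) :
    ∑ b ∈ Finset.Icc 1 (n-2), ((b : ℤ)^2 - 3) *
        (intChoose (2*(n:ℤ) - b - k - 4) ((n:ℤ) - k - 2) -
          intChoose (2*(n:ℤ) - b - k - 4) ((n:ℤ) - 2)) =
      -2*(n:ℤ)^2 * intChoose (2*(n:ℤ) - k - 2) ((n:ℤ) + 1)
        + (2*(n:ℤ)^2 - 1) * intChoose (2*(n:ℤ) - k - 3) (n:ℤ)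
        - 3 * intChoose (2*(n:ℤ) - k - 4) ((n:ℤ) - 3)
        + 3 * intChoose (2*(n:ℤ) - k - 4) ((n:ℤ) - 1)
        + (2*(n:ℤ) - 5) * intChoose (2*(n:ℤ) - k - 3) ((n:ℤ) - 3)
        - 2*((n:ℤ) - 2)^2 * intChoose (2*(n:ℤ) - k - 3) ((n:ℤ) - 2)
        - 2*((n:ℤ) - 1)*((n:ℤ) - 2) * intChoose (2*(n:ℤ) - k - 3) ((n:ℤ) - 1)
        + 2*((n:ℤ) + 1)*((n:ℤ) - 1) * intChoose (2*(n:ℤ) - k - 3) ((n:ℤ) + 1)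
        + 2 * intChoose (2*(n:ℤ) - k - 2) ((n:ℤ) - 3)
        - 2*((n:ℤ) - 2) * intChoose (2*(n:ℤ) - k - 2) ((n:ℤ) - 2)
        + 2*((n:ℤ) - 2)*((n:ℤ) - 1) * intChoose (2*(n:ℤ) - k - 2) ((n:ℤ) - 1) := by
  have telescope := Finset.sum_Icc_sub (by omega : 1 ≤ n - 2) fun b : ℕ ↦ antidiff n k b
  rw [show ((n - 2 + 1 : ℕ) : ℤ) = n - 1 by omega, Nat.cast_one] at telescope
  calc _ = ∑ b ∈ Finset.Icc 1 (n - 2), -(antidiff n k (b + 1 : ℕ) - antidiff n k b) := by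
        refine Finset.sum_congr rfl fun b hb ↦ ?_
        rw [neg_sub, Nat.cast_add_one, antidiff_sub_antidiff_add_one (by grind)]
    _ = antidiff n k 1 - antidiff n k (n - 1) := by rw [Finset.sum_neg_distrib, telescope, neg_sub]
    _ = _ := by rw [antidiff_eq_zero k.cast_nonneg, sub_zero, antidiff_one (by omega)]

theorem sum_b_choose_identity (n k : ℕ) (hn : 3 ≤ n) (hk1 : 1 ≤ k) (hk2 : k ≤ n-2) :
    ∑ b ∈ Finset.Icc 1 (n-2), ((b : ℤ)^2 - 3) *
        (intChoose (2*(n:ℤ) - b - k - 4) ((n:ℤ) - k - 2) -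
          intChoose (2*(n:ℤ) - b - k - 4) ((n:ℤ) - 2)) =
      -2*(n:ℤ)^2 * intChoose (2*(n:ℤ) - k - 2) ((n:ℤ) + 1)
        + (2*(n:ℤ)^2 - 1) * intChoose (2*(n:ℤ) - k - 3) (n:ℤ)
        - 3 * intChoose (2*(n:ℤ) - k - 4) ((n:ℤ) - 3)
        + 3 * intChoose (2*(n:ℤ) - k - 4) ((n:ℤ) - 1)
        + (2*(n:ℤ) - 5) * intChoose (2*(n:ℤ) - k - 3) ((n:ℤ) - 3)
        - 2*((n:ℤ) - 2)^2 * intChoose (2*(n:ℤ) - k - 3) ((n:ℤ) - 2)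
        - 2*((n:ℤ) - 1)*((n:ℤ) - 2) * intChoose (2*(n:ℤ) - k - 3) ((n:ℤ) - 1)
        + 2*((n:ℤ) + 1)*((n:ℤ) - 1) * intChoose (2*(n:ℤ) - k - 3) ((n:ℤ) + 1)
        + 2 * intChoose (2*(n:ℤ) - k - 2) ((n:ℤ) - 3)
        - 2*((n:ℤ) - 2) * intChoose (2*(n:ℤ) - k - 2) ((n:ℤ) - 2)
        + 2*((n:ℤ) - 2)*((n:ℤ) - 1) * intChoose (2*(n:ℤ) - k - 2) ((n:ℤ) - 1) :=
  sum_b_choose_identity_general n k hn hk2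
end
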